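/- Let D ⊆ ℂ be open and connected with 0 ∉ D, Θ∞ ∈ ℂ, and let y, v, s, t : D → ℂ be differentiable (analytic) functions satisfying on D the system x·y' = −2x·s + Θ∞·y, x·v' = −2x·t·(s·t − x) − Θ∞·v, x·s' = (1 − Θ∞)·s − 2x·y + 4·y·s·t, x·t' = Θ∞·t − 2·y·t² + 2·v, with s nonvanishing on D. Then the function u := −y/s satisfies the first-order relation x·u'(x) = 2x − (1 − 2Θ∞)·u(x) + 4·s(x)t(x)·u(x)² − 2x·u(x)² for all x ∈ D. -/

import Mathlib

open Complex

/-- The Painlevé-III potential system with parameter `Θinf` on the set `D`: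
`y, v, s, t` are differentiable at every point of `D` and satisfy the coupled
first-order ODEs there. -/
def PIIIPotentialSystem (Θinf : ℂ) (D : Set ℂ) (y v s t : ℂ → ℂ) : Prop :=
  ∀ x ∈ D,
    DifferentiableAt ℂ y x ∧ DifferentiableAt ℂ v x ∧
    DifferentiableAt ℂ s x ∧ DifferentiableAt ℂ t x ∧
    x * deriv y x = -2 * x * s x + Θinf * y x ∧
    x * deriv v x = -2 * x * t x * (s x * t x - x) - Θinf * v x ∧
    x * deriv s x = (1 - Θinf) * s x - 2 * x * y x + 4 * y x * s x * t x ∧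
    x * deriv t x = Θinf * t x - 2 * y x * (t x) ^ 2 + 2 * v x

/-- Along solutions of the Painlevé-III potential system with `s` nonvanishing,
the function `u = -y/s` satisfies the first-order relation
`x·u' = 2x − (1 − 2Θinf)·u + 4·s·t·u² − 2x·u²`. -/
theorem potential_system_first_order_relation (D : Set ℂ) (hD : IsOpen D)
    (hconn : IsConnected D) (h0 : (0 : ℂ) ∉ D) (Θinf : ℂ) (y v s t : ℂ → ℂ)
    (hsys : PIIIPotentialSystem Θinf D y v s t)
    (hsnz : ∀ x ∈ D, s x ≠ 0) :
    ∀ x ∈ D,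
      x * deriv (fun z => -y z / s z) x =
        2 * x - (1 - 2 * Θinf) * (-y x / s x)
          + 4 * s x * t x * (-y x / s x) ^ 2 - 2 * x * (-y x / s x) ^ 2 := by
  intro x hx
  obtain ⟨hy, hv, hs, ht, ey, ev, es, et⟩ := hsys x hx
  have hsx : s x ≠ 0 := hsnz x hx
  have hx0 : x ≠ 0 := fun h => h0 (h ▸ hx)
  have hd : deriv (fun z => -y z / s z) x =
      (deriv (fun z => -y z) x * s x - (-y x) * deriv s x) / s x ^ 2 :=
    deriv_div hy.neg hs hsx
  rw [hd, deriv.fun_neg]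
  apply mul_left_cancel₀ (pow_ne_zero 2 hsx)
  field_simp
  ring_nf
  linear_combination (-1 : ℂ) * (s x * ey - y x * es)
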